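/- Let T be a finite rooted tree, and for each vertex v let d(v) be its set of children. Suppose each v carries a finite family of 'local' events {R(v, v') : v' ∈ d(v)} on a probability space (Ω, 𝒜, P) with labels s(v, v') ∈ {0,1}, and let α : V → ℝ≥0 satisfy the local Bonferroni condition. Assign t(v) = 1 if s(v, v') = 1 for some v' ∈ d(v), and t(v) = 0 otherwise, and suppose that whenever t(v) = 1, P(∃ v' ∈ d(v) with s(v,v') = 1 and R(v,v') occurs) ≤ α(v). Define the extended CaD false-rejection event as: there exist a vertex w and a child w' ∈ d(w) with s(w,w') = 1 and R(w,w') occurring, such that for every proper ancestor u of w, all local events R(u, u'), u' ∈ d(u), occur. Then the probability of the extended CaD false-rejection event is at most α(v0). -/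

import Mathlib

/-!
Call a vertex true when one of its local null hypotheses is true, and let `F` be the set of
true vertices with no true proper ancestor. A false rejection at `w` entails one at the ancestor
`u ∈ F` of `w`: if `u ≠ w`, every local hypothesis at `u`, the true ones included, was rejected
on the way down to `w`. By the union bound the error is at most `∑_{v ∈ F} α v`, and since `F`
is an antichain, the local Bonferroni condition bounds this sum by `α root`, recursing from a
vertex to its children.
-/

open Function MeasureTheory
open scoped NNReal ENNReal

/-- A finite rooted tree, encoded by a parent function. The root is a fixed
point of `parent`, and iterating `parent` from any vertex reaches the root. -/
structure CaDTree (V : Type) [Fintype V] [DecidableEq V] where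
  root : V
  parent : V → V
  parent_root : parent root = root
  reaches_root : ∀ v, ∃ n, parent^[n] v = root

namespace CaDTree

variable {V : Type} [Fintype V] [DecidableEq V] (T : CaDTree V)

/-- `u` is an ancestor of `v` (including `v` itself). -/
def Ancestor (u v : V) : Prop := ∃ n, T.parent^[n] v = u

/-- `u` is a proper ancestor of `v`. -/
def ProperAncestor (u v : V) : Prop := T.Ancestor u v ∧ u ≠ v

/-- The set of (immediate) children of `v`. -/
def children (v : V) : Finset V :=
  Finset.univ.filter (fun w => T.parent w = v ∧ w ≠ T.root)

/-- A leaf is a vertex without children. -/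
def IsLeaf (v : V) : Prop := T.children v = ∅

/-- Depth of a vertex: distance to the root along the parent map. -/
noncomputable def depth (v : V) : ℕ := Nat.find (T.reaches_root v)

/-- The tree is complete of depth `L`: every leaf lies at depth `L`. -/
def CompleteDepth (L : ℕ) : Prop := ∀ v, T.IsLeaf v → T.depth v = L

/-- Local Bonferroni condition for the levels `α`. -/
def LocalBonferroni (α : V → ℝ≥0) : Prop :=
  ∀ v, ¬ T.IsLeaf v → ∑ w ∈ T.children v, α w ≤ α v

/-- The first-true set of a labeling: vertices labeled `true` all of whose
proper ancestors are labeled `false`. -/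
noncomputable def firstTrue (t : V → Bool) : Finset V :=
  letI := Classical.decPred (fun v => t v = true ∧ ∀ u, T.ProperAncestor u v → t u = false)
  Finset.univ.filter (fun v => t v = true ∧ ∀ u, T.ProperAncestor u v → t u = false)

/-- An antichain: no vertex of `A` is an ancestor of another vertex of `A`. -/
def IsAntichainTree (A : Finset V) : Prop :=
  ∀ u ∈ A, ∀ v ∈ A, u ≠ v → ¬ T.Ancestor u v

end CaDTree

theorem Finset.sum_biUnion_le {ι β M : Type*} [DecidableEq β] [AddCommMonoid M] [PartialOrder M]
    [CanonicallyOrderedAdd M] (s : Finset ι) (t : ι → Finset β) (f : β → M) :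
    ∑ b ∈ s.biUnion t, f b ≤ ∑ i ∈ s, ∑ b ∈ t i, f b := by
  rw [← Finset.sup_eq_biUnion]
  refine s.apply_sup_le_sum (f := fun B => ∑ b ∈ B, f b) Finset.sum_empty fun {B C} => ?_
  rw [← Finset.sum_union_inter]
  exact le_self_add

namespace CaDTree

variable {V : Type} [Fintype V] [DecidableEq V] (T : CaDTree V)

lemma depth_spec (v : V) : T.parent^[T.depth v] v = T.root :=
  Nat.find_spec (T.reaches_root v)

lemma depth_le_of_iterate_eq_root {v : V} {n : ℕ} (h : T.parent^[n] v = T.root) :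
    T.depth v ≤ n :=
  Nat.find_min' (T.reaches_root v) h

lemma depth_eq_zero_iff {v : V} : T.depth v = 0 ↔ v = T.root := by
  constructor
  · intro h
    simpa [h] using T.depth_spec v
  · rintro rfl
    exact Nat.le_zero.mp (T.depth_le_of_iterate_eq_root rfl)

lemma depth_eq_depth_parent_add_one {v : V} (hv : v ≠ T.root) :
    T.depth v = T.depth (T.parent v) + 1 := by
  obtain ⟨n, hn⟩ := Nat.exists_eq_succ_of_ne_zero (mt T.depth_eq_zero_iff.mp hv)
  have hle : T.depth (T.parent v) ≤ n :=
    T.depth_le_of_iterate_eq_root (by rw [← iterate_succ_apply, ← hn, T.depth_spec])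
  have hge : T.depth v ≤ T.depth (T.parent v) + 1 :=
    T.depth_le_of_iterate_eq_root (by rw [iterate_succ_apply, T.depth_spec])
  omega

lemma depth_parent_le (v : V) : T.depth (T.parent v) ≤ T.depth v := by
  by_cases hv : v = T.root
  · rw [hv, T.parent_root]
  · rw [T.depth_eq_depth_parent_add_one hv]
    exact Nat.le_succ _

lemma depth_iterate_parent_le (n : ℕ) (v : V) : T.depth (T.parent^[n] v) ≤ T.depth v := by
  induction n with
  | zero => rfl
  | succ n ih => exact (iterate_succ_apply' T.parent n v ▸ T.depth_parent_le _).trans ih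

lemma mem_children {c v : V} : c ∈ T.children v ↔ T.parent c = v ∧ c ≠ T.root := by
  simp [children]

lemma depth_of_mem_children {c v : V} (hc : c ∈ T.children v) : T.depth c = T.depth v + 1 := by
  obtain ⟨rfl, hroot⟩ := T.mem_children.mp hc
  exact T.depth_eq_depth_parent_add_one hroot

lemma ancestor_refl (v : V) : T.Ancestor v v := ⟨0, rfl⟩

lemma ancestor_trans {u v w : V} (huv : T.Ancestor u v) (hvw : T.Ancestor v w) :
    T.Ancestor u w := by
  obtain ⟨n, rfl⟩ := huv
  obtain ⟨m, rfl⟩ := hvw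
  exact ⟨n + m, iterate_add_apply _ _ _ _⟩

lemma root_ancestor (v : V) : T.Ancestor T.root v := ⟨T.depth v, T.depth_spec v⟩

lemma depth_lt_of_properAncestor {u v : V} (h : T.ProperAncestor u v) :
    T.depth u < T.depth v := by
  obtain ⟨⟨n, rfl⟩, hne⟩ := h
  cases n with
  | zero => exact absurd rfl hne
  | succ n =>
    have hv : v ≠ T.root := by
      rintro rfl
      exact hne (iterate_fixed T.parent_root _)
    rw [iterate_succ_apply]
    calc T.depth (T.parent^[n] (T.parent v)) ≤ T.depth (T.parent v) :=
          T.depth_iterate_parent_le n _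
      _ < T.depth v := by rw [T.depth_eq_depth_parent_add_one hv]; exact Nat.lt_succ_self _

lemma exists_mem_children_ancestor {v a : V} (h : T.Ancestor v a) (hne : v ≠ a) :
    ∃ c ∈ T.children v, T.Ancestor c a := by
  obtain ⟨n, hn⟩ := h
  induction n with
  | zero => exact absurd hn hne.symm
  | succ m ih =>
    by_cases hm : T.parent^[m] a = v
    · exact ih hm
    · refine ⟨_, T.mem_children.mpr ⟨?_, fun hroot => hm ?_⟩, m, rfl⟩
      · rwa [← iterate_succ_apply' T.parent m a]
      · rw [← hn, iterate_succ_apply', hroot, T.parent_root]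

variable {T} in
lemma IsAntichainTree.subset {A B : Finset V} (hA : T.IsAntichainTree A) (hBA : B ⊆ A) :
    T.IsAntichainTree B :=
  fun u hu v hv => hA u (hBA hu) v (hBA hv)

theorem sum_le_of_isAntichainTree {α : V → ℝ≥0} (hLB : T.LocalBonferroni α) {A : Finset V}
    (hA : T.IsAntichainTree A) (v : V) (hdesc : ∀ a ∈ A, T.Ancestor v a) :
    ∑ a ∈ A, α a ≤ α v := by
  classical
  by_cases hvA : v ∈ A
  · have hA_eq : A = {v} := Finset.eq_singleton_iff_unique_mem.mpr
      ⟨hvA, fun a ha => by_contra fun hne => hA v hvA a ha (Ne.symm hne) (hdesc a ha)⟩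
    simp [hA_eq]
  have hcover : A ⊆ (T.children v).biUnion fun c => A.filter (T.Ancestor c) := by
    intro a ha
    obtain ⟨c, hc, hca⟩ :=
      T.exists_mem_children_ancestor (hdesc a ha) (ne_of_mem_of_not_mem ha hvA).symm
    exact Finset.mem_biUnion.mpr ⟨c, hc, Finset.mem_filter.mpr ⟨ha, hca⟩⟩
  calc ∑ a ∈ A, α a ≤ ∑ c ∈ T.children v, ∑ a ∈ A.filter (T.Ancestor c), α a :=
        (Finset.sum_le_sum_of_subset hcover).trans (Finset.sum_biUnion_le _ _ _)
    _ ≤ ∑ c ∈ T.children v, α c := Finset.sum_le_sum fun c hc =>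
        sum_le_of_isAntichainTree hLB (hA.subset (Finset.filter_subset _ _)) c
          fun a ha => (Finset.mem_filter.mp ha).2
    _ ≤ α v := by
        by_cases hleaf : T.IsLeaf v
        · rw [show T.children v = ∅ from hleaf, Finset.sum_empty]
          exact zero_le
        · exact hLB v hleaf
termination_by Finset.univ.sup T.depth - T.depth v
decreasing_by
  have := T.depth_of_mem_children hc
  have := Finset.le_sup (f := T.depth) (Finset.mem_univ c)
  omega

lemma mem_firstTrue {t : V → Bool} {v : V} :
    v ∈ T.firstTrue t ↔ t v = true ∧ ∀ u, T.ProperAncestor u v → t u = false := by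
  simp [firstTrue]

lemma isAntichainTree_firstTrue (t : V → Bool) : T.IsAntichainTree (T.firstTrue t) := by
  intro u hu v hv huv hanc
  have := (T.mem_firstTrue.mp hv).2 u ⟨hanc, huv⟩
  simp [(T.mem_firstTrue.mp hu).1] at this

theorem exists_mem_firstTrue_ancestor {t : V → Bool} {w : V} (hw : t w = true) :
    ∃ u ∈ T.firstTrue t, T.Ancestor u w := by
  by_cases hfirst : ∀ u, T.ProperAncestor u w → t u = false
  · exact ⟨w, T.mem_firstTrue.mpr ⟨hw, hfirst⟩, T.ancestor_refl w⟩
  simp only [not_forall, Bool.not_eq_false, exists_prop] at hfirst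
  obtain ⟨u, hu, htu⟩ := hfirst
  obtain ⟨u₀, hu₀, hu₀u⟩ := exists_mem_firstTrue_ancestor htu
  exact ⟨u₀, hu₀, T.ancestor_trans hu₀u hu.1⟩
termination_by T.depth w
decreasing_by exact T.depth_lt_of_properAncestor hu

/-- The label `t(v)` of the paper: some local null hypothesis at `v` is true. -/
def hasTrueNull (s : V → V → Bool) (v : V) : Bool :=
  decide (∃ c ∈ T.children v, s v c = true)

lemma hasTrueNull_eq_true {s : V → V → Bool} {v : V} :
    T.hasTrueNull s v = true ↔ ∃ c ∈ T.children v, s v c = true := by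
  simp [hasTrueNull]

section Events

variable {Ω : Type*} (R : V → V → Set Ω) (s : V → V → Bool)

def localFalseRejection (v : V) : Set Ω :=
  {ω | ∃ v' ∈ T.children v, s v v' = true ∧ ω ∈ R v v'}

def cadFalseRejection : Set Ω :=
  {ω | ∃ w, ∃ w' ∈ T.children w, s w w' = true ∧ ω ∈ R w w' ∧
    ∀ u, T.ProperAncestor u w → ∀ u' ∈ T.children u, ω ∈ R u u'}

lemma cadFalseRejection_subset_biUnion_firstTrue :
    T.cadFalseRejection R s ⊆
      ⋃ v ∈ T.firstTrue (T.hasTrueNull s), T.localFalseRejection R s v := by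
  rintro ω ⟨w, w', hw', hs, hR, hanc⟩
  obtain ⟨u, hu, huw⟩ :=
    T.exists_mem_firstTrue_ancestor (T.hasTrueNull_eq_true.mpr ⟨w', hw', hs⟩)
  refine Set.mem_biUnion hu ?_
  by_cases hu_eq : u = w
  · subst hu_eq
    exact ⟨w', hw', hs, hR⟩
  · obtain ⟨c, hc, hsc⟩ := T.hasTrueNull_eq_true.mp (T.mem_firstTrue.mp hu).1
    exact ⟨c, hc, hsc, hanc u ⟨huw, hu_eq⟩ c hc⟩

end Events

end CaDTree

theorem extended_cad_familywise_error_general {V : Type} [Fintype V] [DecidableEq V]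
    (T : CaDTree V) (α : V → ℝ≥0) (hLB : T.LocalBonferroni α)
    {Ω : Type} [MeasurableSpace Ω] (P : Measure Ω)
    (R : V → V → Set Ω) (s : V → V → Bool)
    (hlocal : ∀ v, (∃ v' ∈ T.children v, s v v' = true) →
      P {ω | ∃ v' ∈ T.children v, s v v' = true ∧ ω ∈ R v v'} ≤ α v) :
    P {ω | ∃ w, ∃ w' ∈ T.children w, s w w' = true ∧ ω ∈ R w w' ∧
        ∀ u, T.ProperAncestor u w → ∀ u' ∈ T.children u, ω ∈ R u u'} ≤
      α T.root := by
  set F := T.firstTrue (T.hasTrueNull s)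
  calc P (T.cadFalseRejection R s)
      ≤ P (⋃ v ∈ F, T.localFalseRejection R s v) :=
        measure_mono (T.cadFalseRejection_subset_biUnion_firstTrue R s)
    _ ≤ ∑ v ∈ F, P (T.localFalseRejection R s v) := measure_biUnion_finset_le _ _
    _ ≤ ∑ v ∈ F, (α v : ℝ≥0∞) := Finset.sum_le_sum fun v hv =>
        hlocal v (T.hasTrueNull_eq_true.mp (T.mem_firstTrue.mp hv).1)
    _ = ↑(∑ v ∈ F, α v) := (ENNReal.ofNNReal_finsetSum _ _).symm
    _ ≤ α T.root := ENNReal.coe_le_coe.mpr <|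
        T.sum_le_of_isAntichainTree hLB (T.isAntichainTree_firstTrue _) T.root
          fun a _ => T.root_ancestor a

/-- the extended CaD procedure, with a local multiple testing
problem at each vertex, controls the familywise error at level `α(root)`. -/
theorem extended_cad_familywise_error {V : Type} [Fintype V] [DecidableEq V]
    (T : CaDTree V) (α : V → ℝ≥0) (hLB : T.LocalBonferroni α)
    {Ω : Type} [MeasurableSpace Ω] (P : Measure Ω) [IsProbabilityMeasure P]
    (R : V → V → Set Ω) (s : V → V → Bool)
    (hlocal : ∀ v, (∃ v' ∈ T.children v, s v v' = true) →
      P {ω | ∃ v' ∈ T.children v, s v v' = true ∧ ω ∈ R v v'} ≤ α v) :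
    P {ω | ∃ w, ∃ w' ∈ T.children w, s w w' = true ∧ ω ∈ R w w' ∧
        ∀ u, T.ProperAncestor u w → ∀ u' ∈ T.children u, ω ∈ R u u'} ≤
      α T.root :=
  extended_cad_familywise_error_general T α hLB P R s hlocal
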